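/- Let f : ℝⁿ → ℝ be C¹ and strictly convex with unique global minimizer ȳ, μ-strongly convex with respect to a C², strictly convex, Legendre-type potential φ : ℝⁿ → ℝ (μ > 0), with conjugate φ*; set x̄ := ∇φ(ȳ) and V(x) := D_{φ*}(x, x̄). Let x : [0, ∞) → ℝⁿ solve ẋ(t) = −∇f(∇φ*(x(t))), x(0) = x₀, with output y(t) := ∇φ*(x(t)). Then for all t ≥ 0, V(x(t)) ≤ e^{−μt} V(x₀) + ∫₀ᵗ e^{−μ(t−s)} ( f(ȳ) − f(y(s)) ) ds. -/

import Mathlib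

open scoped RealInnerProductSpace
open Filter MeasureTheory

/-- Legendre–Fenchel conjugate: `ψ*(v) = sup_x { ⟨v, x⟩ − ψ(x) }`. -/
noncomputable def fenchel {n : ℕ} (ψ : EuclideanSpace ℝ (Fin n) → ℝ)
    (v : EuclideanSpace ℝ (Fin n)) : ℝ :=
  ⨆ z : EuclideanSpace ℝ (Fin n), (⟪v, z⟫ - ψ z)

/-- Bregman divergence: `D_ψ(y, y') = ψ(y) − ψ(y') − ⟨∇ψ(y'), y − y'⟩`. -/
noncomputable def bregman {n : ℕ} (ψ : EuclideanSpace ℝ (Fin n) → ℝ)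
    (y y' : EuclideanSpace ℝ (Fin n)) : ℝ :=
  ψ y - ψ y' - ⟪gradient ψ y', y - y'⟫

/-- `φ` is of Legendre type: `|∇φ(x)| → ∞` as `|x| → ∞`. -/
def LegendreType {n : ℕ} (φ : EuclideanSpace ℝ (Fin n) → ℝ) : Prop :=
  Tendsto (fun z => ‖gradient φ z‖) (cocompact (EuclideanSpace ℝ (Fin n))) atTop

/-!
Legendre type makes `∇φ` a proper map, so its range is closed; strict convexity makes it
injective; and the Tikhonov-regularised gradients `∇φ + ε • id`, which are onto, show that
its range is dense. Hence `∇φ` is a homeomorphism, and its inverse `Y` is the gradient of `φ*`.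
The Fenchel–Young equality gives `V x = D_φ(ȳ, Y x)`, so along the flow
`d/dt V(x t) = ⟪∇f (y t), ȳ - y t⟫ ≤ f ȳ - f (y t) - μ V(x t)` by strong convexity relative to `φ`,
and the bound is the integrated form of this linear differential inequality.
-/

open Set InnerProductSpace

section Gradient

variable {F : Type*} [NormedAddCommGroup F] [InnerProductSpace ℝ F] [CompleteSpace F]
  {φ : F → ℝ}

theorem ConvexOn.add_inner_gradient_le (hφ : ConvexOn ℝ univ φ) {a : F}
    (hd : DifferentiableAt ℝ φ a) (b : F) : φ a + ⟪gradient φ a, b - a⟫ ≤ φ b := by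
  have hline : HasDerivAt (φ ∘ AffineMap.lineMap (k := ℝ) a b) ⟪gradient φ a, b - a⟫ 0 := by
    simpa using hd.hasGradientAt.hasFDerivAt.comp_hasDerivAt_of_eq (0 : ℝ)
      AffineMap.hasDerivAt_lineMap (by simp)
  have hslope := (hφ.comp_affineMap (AffineMap.lineMap a b)).le_slope_of_hasDerivAt
    (mem_univ 0) (mem_univ 1) one_pos hline
  simp only [slope_def_field, Function.comp_apply, AffineMap.lineMap_apply_zero,
    AffineMap.lineMap_apply_one, sub_zero, div_one] at hslope
  linarith

theorem ConvexOn.inner_sub_le_of_gradient_eq (hφ : ConvexOn ℝ univ φ) {v z : F}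
    (hd : DifferentiableAt ℝ φ z) (hz : gradient φ z = v) (w : F) :
    ⟪v, w⟫ - φ w ≤ ⟪v, z⟫ - φ z := by
  have := hφ.add_inner_gradient_le hd w
  rw [hz, inner_sub_right] at this
  linarith

theorem ConvexOn.inner_gradient_sub_gradient_nonneg (hφ : ConvexOn ℝ univ φ)
    (hd : Differentiable ℝ φ) (a b : F) : 0 ≤ ⟪gradient φ a - gradient φ b, a - b⟫ := by
  have hab := hφ.add_inner_gradient_le (hd a) b
  have hba := hφ.add_inner_gradient_le (hd b) a
  rw [← neg_sub a b, inner_neg_right] at hab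
  rw [inner_sub_left]
  linarith

theorem StrictConvexOn.injective_gradient (hφ : StrictConvexOn ℝ univ φ)
    (hd : Differentiable ℝ φ) : Function.Injective (gradient φ) := by
  intro a b hab
  by_contra hne
  set m : F := (1 / 2 : ℝ) • a + (1 / 2 : ℝ) • b
  have hmid : φ m < 1 / 2 * φ a + 1 / 2 * φ b :=
    hφ.2 (mem_univ a) (mem_univ b) hne one_half_pos one_half_pos (by norm_num)
  have ha := hφ.convexOn.add_inner_gradient_le (hd a) m
  have hb := hφ.convexOn.add_inner_gradient_le (hd b) m
  have hba := hφ.convexOn.add_inner_gradient_le (hd b) a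
  -- the supporting hyperplanes at `a` and `b` coincide, so `φ` is affine on `[a, b]`
  have hma : m - a = (1 / 2 : ℝ) • (b - a) := by module
  have hmb : m - b = -(1 / 2 : ℝ) • (b - a) := by module
  rw [hma, inner_smul_right] at ha
  rw [hmb, inner_smul_right, ← hab] at hb
  rw [← neg_sub b a, inner_neg_right, ← hab] at hba
  linarith

theorem ConvexOn.mul_norm_le_of_gradient_add_smul_eq (hφ : ConvexOn ℝ univ φ)
    (hd : Differentiable ℝ φ) {ε : ℝ} {z v : F} (hz : gradient φ z + ε • z = v) :
    ε * ‖z‖ ≤ ‖v - gradient φ 0‖ := by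
  have hmono := hφ.inner_gradient_sub_gradient_nonneg hd z 0
  have hsplit : gradient φ z - gradient φ 0 = (v - gradient φ 0) - ε • z := by rw [← hz]; abel
  rw [hsplit, sub_zero, inner_sub_left, real_inner_smul_left,
    real_inner_self_eq_norm_sq] at hmono
  have hcs := real_inner_le_norm (v - gradient φ 0) z
  rcases (norm_nonneg z).eq_or_lt with h | h
  · rw [← h, mul_zero]; positivity
  · nlinarith

variable [ProperSpace F]

theorem ConvexOn.exists_gradient_add_smul_eq (hφ : ConvexOn ℝ univ φ)
    (hd : Differentiable ℝ φ) {ε : ℝ} (hε : 0 < ε) (v : F) :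
    ∃ z, gradient φ z + ε • z = v := by
  set ψ : F → ℝ := fun z => φ z - ⟪v, z⟫ + ε / 2 * ‖z‖ ^ 2
  have hψ_deriv : ∀ z, HasFDerivAt ψ (toDual ℝ F (gradient φ z + ε • z - v)) z := by
    intro z
    refine (((hd z).hasGradientAt.hasFDerivAt.sub (innerSL ℝ v).hasFDerivAt).add
      ((hasStrictFDerivAt_norm_sq z).hasFDerivAt.const_mul (ε / 2))).congr_fderiv ?_
    ext w
    simp only [toDual_gradient, add_apply, sub_apply, coe_innerSL_apply, smul_apply, nsmul_eq_mul,
      Nat.cast_ofNat, smul_eq_mul, map_sub, map_add, map_smul, toDual_apply_apply]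
    ring
  have hψ_lower : ∀ z, φ 0 + ‖z‖ * (ε / 2 * ‖z‖ - ‖gradient φ 0 - v‖) ≤ ψ z := by
    intro z
    have h0 := hφ.add_inner_gradient_le (hd 0) z
    have hcs := neg_le_of_abs_le (abs_real_inner_le_norm (gradient φ 0 - v) z)
    simp only [sub_zero, inner_sub_left] at h0 hcs
    simp only [ψ]
    nlinarith
  have hψ_coercive : Tendsto ψ (cocompact F) atTop := by
    refine tendsto_atTop_mono hψ_lower (tendsto_atTop_add_const_left _ _ ?_)
    refine Tendsto.comp (f := norm) (g := fun r => r * (ε / 2 * r - ‖gradient φ 0 - v‖))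
      (Tendsto.atTop_mul_atTop₀ tendsto_id ?_) tendsto_norm_cocompact_atTop
    exact tendsto_atTop_add_const_right _ _ (tendsto_id.const_mul_atTop (by positivity))
  obtain ⟨z, hz⟩ := (continuous_iff_continuousAt.2 fun z => (hψ_deriv z).continuousAt)
    |>.exists_forall_le hψ_coercive
  have hcrit := (show IsLocalMin ψ z from Eventually.of_forall hz).hasFDerivAt_eq_zero (hψ_deriv z)
  exact ⟨z, sub_eq_zero.1 ((map_eq_zero_iff _ (toDual ℝ F).injective).1 hcrit)⟩

theorem isProperMap_gradient (hcont : Continuous (gradient φ))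
    (hleg : Tendsto (fun z => ‖gradient φ z‖) (cocompact F) atTop) :
    IsProperMap (gradient φ) := by
  rw [← Metric.cobounded_eq_cocompact] at hleg
  rw [isProperMap_iff_tendsto_cocompact, ← Metric.cobounded_eq_cocompact]
  exact ⟨hcont, tendsto_norm_atTop_iff_cobounded.1 hleg⟩

theorem ConvexOn.surjective_gradient (hφ : ConvexOn ℝ univ φ) (hd : Differentiable ℝ φ)
    (hcont : Continuous (gradient φ))
    (hleg : Tendsto (fun z => ‖gradient φ z‖) (cocompact F) atTop) :
    Function.Surjective (gradient φ) := by
  intro v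
  have hproper := isProperMap_gradient hcont hleg
  suffices v ∈ closure (range (gradient φ)) by
    rwa [hproper.isClosedMap.isClosed_range.closure_eq] at this
  obtain ⟨R, hR, hbounded⟩ :=
    (hproper.isCompact_preimage (isCompact_closedBall 0 (‖v‖ + ‖v - gradient φ 0‖))).isBounded
      |>.subset_closedBall_lt 0 0
  refine Metric.mem_closure_iff.2 fun δ hδ => ?_
  set ε := δ / (R + 1)
  have hε : 0 < ε := by positivity
  obtain ⟨z, hz⟩ := hφ.exists_gradient_add_smul_eq hd hε v
  have hz' : gradient φ z = v - ε • z := eq_sub_of_add_eq hz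
  have hεz := hφ.mul_norm_le_of_gradient_add_smul_eq hd hz
  have hzR : ‖z‖ ≤ R := by
    have : z ∈ Metric.closedBall 0 R := hbounded (by
      rw [mem_preimage, mem_closedBall_zero_iff, hz']
      calc ‖v - ε • z‖ ≤ ‖v‖ + ε * ‖z‖ :=
            (norm_sub_le _ _).trans_eq (by rw [norm_smul, Real.norm_of_nonneg hε.le])
        _ ≤ _ := by linarith)
    simpa using this
  refine ⟨gradient φ z, mem_range_self z, ?_⟩
  rw [dist_eq_norm, hz', sub_sub_cancel, norm_smul, Real.norm_of_nonneg hε.le]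
  calc ε * ‖z‖ ≤ ε * R := by gcongr
    _ < δ := by
      rw [div_mul_eq_mul_div, div_lt_iff₀ (by linarith)]
      nlinarith

noncomputable def StrictConvexOn.gradientHomeomorph (hφ : StrictConvexOn ℝ univ φ)
    (hd : Differentiable ℝ φ) (hcont : Continuous (gradient φ))
    (hleg : Tendsto (fun z => ‖gradient φ z‖) (cocompact F) atTop) : F ≃ₜ F :=
  (Equiv.ofBijective (gradient φ) ⟨hφ.injective_gradient hd,
    hφ.convexOn.surjective_gradient hd hcont hleg⟩).toHomeomorphOfContinuousClosed hcont
    (isProperMap_gradient hcont hleg).isClosedMap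

end Gradient

theorem antitoneOn_exp_mul_sub_integral_of_deriv_le {V V' c : ℝ → ℝ} {μ T : ℝ}
    (hc : ContinuousOn c (Ici 0)) (hV : ∀ t, 0 ≤ t → HasDerivAt V (V' t) t)
    (hV' : ∀ t, 0 ≤ t → V' t ≤ c t - μ * V t) (hT : 0 ≤ T) :
    AntitoneOn (fun u => Real.exp (μ * u) * V u - ∫ s in (0 : ℝ)..u, Real.exp (μ * s) * c s)
      (Icc 0 T) := by
  set g : ℝ → ℝ := fun s => Real.exp (μ * s) * c s
  have hg : ContinuousOn g (Ici 0) := by fun_prop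
  have hg_int : ∀ t, 0 ≤ t → IntervalIntegrable g volume 0 t := fun t ht =>
    (hg.mono (by rw [uIcc_of_le ht]; exact Icc_subset_Ici_self)).intervalIntegrable
  have hexp : ∀ t, HasDerivAt (fun u => Real.exp (μ * u)) (Real.exp (μ * t) * μ) t := fun t => by
    simpa using ((hasDerivAt_id t).const_mul μ).exp
  refine antitoneOn_of_hasDerivWithinAt_nonpos (convex_Icc 0 T)
    (f' := fun t => Real.exp (μ * t) * μ * V t + Real.exp (μ * t) * V' t - g t) ?_
    (fun t ht => ?_) fun t ht => ?_
  · refine ContinuousOn.sub (fun t ht => ?_) ?_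
    · exact ((hexp t).mul (hV t ht.1)).continuousAt.continuousWithinAt
    · have := intervalIntegral.continuousOn_primitive_interval' (hg_int T hT) left_mem_uIcc
      rwa [uIcc_of_le hT] at this
  · rw [interior_Icc] at ht
    refine (((hexp t).mul (hV t ht.1.le)).sub
      (intervalIntegral.integral_hasDerivAt_right (hg_int t ht.1.le) ?_
        (hg.continuousAt (Ici_mem_nhds ht.1)))).hasDerivWithinAt
    exact hg.mono Ioi_subset_Ici_self |>.stronglyMeasurableAtFilter isOpen_Ioi t ht.1
  · rw [interior_Icc] at ht
    have := mul_le_mul_of_nonneg_left (hV' t ht.1.le) (Real.exp_pos (μ * t)).le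
    simp only [g]
    linarith

theorem le_exp_mul_add_integral_of_deriv_le {V V' c : ℝ → ℝ} {μ T : ℝ}
    (hc : ContinuousOn c (Ici 0)) (hV : ∀ t, 0 ≤ t → HasDerivAt V (V' t) t)
    (hV' : ∀ t, 0 ≤ t → V' t ≤ c t - μ * V t) (hT : 0 ≤ T) :
    V T ≤ Real.exp (-(μ * T)) * V 0 + ∫ s in (0 : ℝ)..T, Real.exp (-(μ * (T - s))) * c s := by
  have hanti := antitoneOn_exp_mul_sub_integral_of_deriv_le hc hV hV' hT
    (left_mem_Icc.2 hT) (right_mem_Icc.2 hT) hT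
  simp only [mul_zero, Real.exp_zero, one_mul, intervalIntegral.integral_same, sub_zero]
    at hanti
  have hintegral : ∫ s in (0 : ℝ)..T, Real.exp (-(μ * (T - s))) * c s
      = Real.exp (-(μ * T)) * ∫ s in (0 : ℝ)..T, Real.exp (μ * s) * c s := by
    rw [← intervalIntegral.integral_const_mul]
    refine intervalIntegral.integral_congr fun s _ => ?_
    simp only [← mul_assoc, ← Real.exp_add]
    ring_nf
  have hexpT : Real.exp (-(μ * T)) * Real.exp (μ * T) = 1 := by
    rw [← Real.exp_add, neg_add_cancel, Real.exp_zero]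
  rw [hintegral, ← mul_add]
  calc V T = Real.exp (-(μ * T)) * (Real.exp (μ * T) * V T) := by rw [← mul_assoc, hexpT, one_mul]
    _ ≤ _ := by gcongr; linarith

section Euclidean

variable {n : ℕ} {φ : EuclideanSpace ℝ (Fin n) → ℝ}

theorem fenchel_eq_of_gradient_eq (hφ : ConvexOn ℝ univ φ) (hd : Differentiable ℝ φ)
    {v z : EuclideanSpace ℝ (Fin n)} (hz : gradient φ z = v) :
    fenchel φ v = ⟪v, z⟫ - φ z :=
  le_antisymm (ciSup_le (hφ.inner_sub_le_of_gradient_eq (hd _) hz))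
    (le_ciSup ⟨_, forall_mem_range.2 (hφ.inner_sub_le_of_gradient_eq (hd _) hz)⟩ z)

theorem hasGradientAt_fenchel (hφ : ConvexOn ℝ univ φ) (hd : Differentiable ℝ φ)
    {Y : EuclideanSpace ℝ (Fin n) → EuclideanSpace ℝ (Fin n)} (hY : ∀ v, gradient φ (Y v) = v)
    {p : EuclideanSpace ℝ (Fin n)} (hYp : ContinuousAt Y p) :
    HasGradientAt (fenchel φ) (Y p) p := by
  rw [hasGradientAt_iff_isLittleO, Asymptotics.isLittleO_iff]
  intro c hc
  filter_upwards [hYp.eventually (Metric.closedBall_mem_nhds (Y p) hc)] with q hq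
  rw [dist_eq_norm] at hq
  have hq_p := hφ.inner_sub_le_of_gradient_eq (hd _) (hY q) (Y p)
  have hp_q := hφ.inner_sub_le_of_gradient_eq (hd _) (hY p) (Y q)
  rw [fenchel_eq_of_gradient_eq hφ hd (hY q), fenchel_eq_of_gradient_eq hφ hd (hY p)]
  have hlower : 0 ≤ ⟪q, Y q⟫ - φ (Y q) - (⟪p, Y p⟫ - φ (Y p)) - ⟪Y p, q - p⟫ := by
    rw [inner_sub_right, real_inner_comm q (Y p), real_inner_comm p (Y p)]
    linarith
  have hupper : ⟪q, Y q⟫ - φ (Y q) - (⟪p, Y p⟫ - φ (Y p)) - ⟪Y p, q - p⟫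
      ≤ ⟪q - p, Y q - Y p⟫ := by
    simp only [inner_sub_left, inner_sub_right, real_inner_comm q (Y p), real_inner_comm p (Y p)]
    linarith
  rw [Real.norm_of_nonneg hlower, mul_comm]
  exact hupper.trans ((real_inner_le_norm _ _).trans (by gcongr))

theorem bregman_fenchel_eq (hφ : ConvexOn ℝ univ φ) (hd : Differentiable ℝ φ)
    {Y : EuclideanSpace ℝ (Fin n) → EuclideanSpace ℝ (Fin n)} (hY : ∀ v, gradient φ (Y v) = v)
    (hgrad : ∀ v, gradient (fenchel φ) v = Y v) (p q : EuclideanSpace ℝ (Fin n)) :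
    bregman (fenchel φ) p q = bregman φ (Y q) (Y p) := by
  simp only [bregman, hgrad, hY, fenchel_eq_of_gradient_eq hφ hd (hY _), inner_sub_right,
    real_inner_comm (Y q)]
  ring

theorem hasDerivAt_bregman_comp {ψ : EuclideanSpace ℝ (Fin n) → ℝ}
    {g q x' : EuclideanSpace ℝ (Fin n)} {x : ℝ → EuclideanSpace ℝ (Fin n)} {t : ℝ}
    (hψ : HasGradientAt ψ g (x t)) (hx : HasDerivAt x x' t) :
    HasDerivAt (fun s => bregman ψ (x s) q) ⟪g - gradient ψ q, x'⟫ t := by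
  have := ((hψ.hasFDerivAt.comp_hasDerivAt t hx).sub_const (ψ q)).sub
    ((hasDerivAt_const t (gradient ψ q)).inner ℝ (hx.sub_const q))
  refine this.congr_deriv ?_
  simp [inner_sub_left]

end Euclidean

theorem strongly_convex_integral_bound_general {n : ℕ} (f φ : EuclideanSpace ℝ (Fin n) → ℝ)
    (hf : ContDiff ℝ 1 f)
    (ybar : EuclideanSpace ℝ (Fin n))
    (hφ : ContDiff ℝ 2 φ) (hφconv : StrictConvexOn ℝ Set.univ φ)
    (hleg : LegendreType φ)
    (μ : ℝ)
    (hstrong : ∀ y y' : EuclideanSpace ℝ (Fin n),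
      f y + ⟪gradient f y, y' - y⟫ + μ * bregman φ y' y ≤ f y')
    (xbar : EuclideanSpace ℝ (Fin n)) (hxbar : xbar = gradient φ ybar)
    (V : EuclideanSpace ℝ (Fin n) → ℝ)
    (hV : V = fun x => bregman (fenchel φ) x xbar)
    (x₀ : EuclideanSpace ℝ (Fin n)) (x y : ℝ → EuclideanSpace ℝ (Fin n))
    (hx0 : x 0 = x₀)
    (hode : ∀ t : ℝ, 0 ≤ t →
      HasDerivAt x (-gradient f (gradient (fenchel φ) (x t))) t)
    (hy : y = fun t => gradient (fenchel φ) (x t)) :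
    ∀ t : ℝ, 0 ≤ t →
      V (x t) ≤ Real.exp (-(μ * t)) * V x₀
        + ∫ s in (0:ℝ)..t, Real.exp (-(μ * (t - s))) * (f ybar - f (y s)) := by
  intro T hT
  have hd : Differentiable ℝ φ := hφ.differentiable (by norm_num)
  set G := hφconv.gradientHomeomorph hd
    ((toDual ℝ _).symm.continuous.comp (hφ.continuous_fderiv (by norm_num))) hleg
  have hY : ∀ v, gradient φ (G.symm v) = v := G.apply_symm_apply
  have hgrad : ∀ v, HasGradientAt (fenchel φ) (G.symm v) v := fun v =>
    hasGradientAt_fenchel hφconv.convexOn hd hY G.symm.continuous.continuousAt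
  have hgrad_eq : ∀ v, gradient (fenchel φ) v = G.symm v := fun v => (hgrad v).gradient
  have hYxbar : G.symm xbar = ybar := hxbar ▸ G.symm_apply_apply ybar
  subst hV hy hx0
  simp only [hgrad_eq] at hode ⊢
  refine le_exp_mul_add_integral_of_deriv_le ?_
    (fun t ht => hasDerivAt_bregman_comp (hgrad (x t)) (hode t ht)) (fun t _ => ?_) hT
  · exact continuousOn_const.sub ((hf.continuous.comp G.symm.continuous).comp_continuousOn
      (fun t ht => (hode t ht).continuousAt.continuousWithinAt))
  · have hstrong_t := hstrong (G.symm (x t)) ybar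
    simp only [hgrad_eq, hYxbar, bregman_fenchel_eq hφconv.convexOn hd hY hgrad_eq]
      at hstrong_t ⊢
    rw [inner_neg_right, ← neg_sub, inner_neg_left, real_inner_comm]
    linarith

/-- if `f` is `μ`-strongly convex w.r.t. `φ` (`μ > 0`), then along the
mirror-descent closed loop,
`V(x(t)) ≤ e^{−μt} V(x₀) + ∫₀ᵗ e^{−μ(t−s)} (f(ȳ) − f(y(s))) ds`. -/
theorem strongly_convex_integral_bound {n : ℕ} (f φ : EuclideanSpace ℝ (Fin n) → ℝ)
    (hf : ContDiff ℝ 1 f) (hfconv : StrictConvexOn ℝ Set.univ f)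
    (ybar : EuclideanSpace ℝ (Fin n)) (hmin : ∀ z, f ybar ≤ f z)
    (hφ : ContDiff ℝ 2 φ) (hφconv : StrictConvexOn ℝ Set.univ φ)
    (hleg : LegendreType φ)
    (μ : ℝ) (hμ : 0 < μ)
    (hstrong : ∀ y y' : EuclideanSpace ℝ (Fin n),
      f y + ⟪gradient f y, y' - y⟫ + μ * bregman φ y' y ≤ f y')
    (xbar : EuclideanSpace ℝ (Fin n)) (hxbar : xbar = gradient φ ybar)
    (V : EuclideanSpace ℝ (Fin n) → ℝ)
    (hV : V = fun x => bregman (fenchel φ) x xbar)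
    (x₀ : EuclideanSpace ℝ (Fin n)) (x y : ℝ → EuclideanSpace ℝ (Fin n))
    (hx0 : x 0 = x₀)
    (hode : ∀ t : ℝ, 0 ≤ t →
      HasDerivAt x (-gradient f (gradient (fenchel φ) (x t))) t)
    (hy : y = fun t => gradient (fenchel φ) (x t)) :
    ∀ t : ℝ, 0 ≤ t →
      V (x t) ≤ Real.exp (-(μ * t)) * V x₀
        + ∫ s in (0:ℝ)..t, Real.exp (-(μ * (t - s))) * (f ybar - f (y s)) :=
  strongly_convex_integral_bound_general f φ hf ybar hφ hφconv hleg μ hstrong xbar hxbar V hV x₀ x y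
    hx0 hode hy
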